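/- Let G be a finite simple graph on p vertices with a universal vertex, and suppose additionally that the vertices of G can be labeled bijectively by {1, …, p} so that in the complement graph Ḡ any two adjacent vertices i, j satisfy i + j ≤ p. Then G satisfies: (1) for any two vertices u, v, d(u, v) ≤ 2; (2) for every n ≥ 2, the n-th power Gⁿ equals G²; and (3) the number q of edges of G satisfies q ≥ C(p,2) − Σ_{j=1}^{⌊p/2⌋}(p − 2j). -/

import Mathlib

/-!
A universal vertex `v₀` joins any two vertices by a walk of length at most `2` through `v₀`, so all
distances are at most `2` and the powers `Gⁿ`, `n ≥ 2`, all coincide with `G²`. The labels `a < b`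
of an edge of `Ḡ` satisfy `1 ≤ a ≤ p / 2` and `a < b ≤ p - a`, so `Ḡ` has at most
`∑_{a=1}^{⌊p/2⌋} (p - 2a)` edges, and `G` has the remaining ones among the `C(p,2)` pairs.
-/

/-- The `n`-th power of a graph `G`: two distinct vertices are adjacent iff their
distance in `G` is between 1 and `n`. -/
def SimpleGraph.powerGraph {V : Type*} (G : SimpleGraph V) (n : ℕ) : SimpleGraph V where
  Adj u w := u ≠ w ∧ 1 ≤ G.dist u w ∧ G.dist u w ≤ n
  symm := by
    constructor
    intro u w h
    exact ⟨h.1.symm, by rw [SimpleGraph.dist_comm]; exact h.2.1,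
      by rw [SimpleGraph.dist_comm]; exact h.2.2⟩
  loopless := by constructor; intro v h; exact h.1 rfl

open Finset Function

/-- The pairs `(a, b)` of positive integers with `a < b` and `a + b ≤ p`. -/
def sumBoundedPairs (p : ℕ) : Finset ((_ : ℕ) × ℕ) :=
  (Icc 1 (p / 2)).sigma fun a => Ioc a (p - a)

lemma card_sumBoundedPairs (p : ℕ) :
    #(sumBoundedPairs p) = ∑ j ∈ Icc 1 (p / 2), (p - 2 * j) := by
  rw [sumBoundedPairs, card_sigma]
  refine sum_congr rfl fun j hj => ?_
  rw [Nat.card_Ioc]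
  omega

lemma mem_sumBoundedPairs {p a b : ℕ} (ha : 0 < a) (hab : a < b) (hsum : a + b ≤ p) :
    ⟨a, b⟩ ∈ sumBoundedPairs p := by
  simp only [sumBoundedPairs, mem_sigma, mem_Icc, mem_Ioc]
  omega

namespace SimpleGraph

variable {V : Type*} (G : SimpleGraph V)

lemma exists_walk_length_le_one_of_forall_adj {v₀ : V} (huniv : ∀ w, w ≠ v₀ → G.Adj v₀ w)
    (w : V) : ∃ q : G.Walk v₀ w, q.length ≤ 1 := by
  by_cases hw : w = v₀
  · subst hw
    exact ⟨.nil, zero_le_one⟩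
  · exact ⟨(huniv w hw).toWalk, le_rfl⟩

lemma dist_le_two_of_forall_adj {v₀ : V} (huniv : ∀ w, w ≠ v₀ → G.Adj v₀ w) (u v : V) :
    G.dist u v ≤ 2 := by
  obtain ⟨qu, hqu⟩ := G.exists_walk_length_le_one_of_forall_adj huniv u
  obtain ⟨qv, hqv⟩ := G.exists_walk_length_le_one_of_forall_adj huniv v
  calc G.dist u v ≤ (qu.reverse.append qv).length := dist_le _
    _ ≤ 2 := by simp only [Walk.length_append, Walk.length_reverse]; omega

lemma powerGraph_eq_of_forall_dist_le {m n : ℕ} (hdist : ∀ u v, G.dist u v ≤ m) (hmn : m ≤ n) :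
    G.powerGraph n = G.powerGraph m := by
  ext u v
  exact ⟨fun ⟨hne, hpos, _⟩ => ⟨hne, hpos, hdist u v⟩,
    fun ⟨hne, hpos, hle⟩ => ⟨hne, hpos, hle.trans hmn⟩⟩

variable [Fintype V] [DecidableRel G.Adj]

lemma card_edgeFinset_add_card_edgeFinset_compl [DecidableEq V] :
    #G.edgeFinset + #Gᶜ.edgeFinset = (Fintype.card V).choose 2 := by
  have hsub : G.edgeFinset ⊆ (⊤ : SimpleGraph V).edgeFinset :=
    edgeFinset_subset_edgeFinset.2 le_top
  have hcompl : Gᶜ.edgeFinset = (⊤ : SimpleGraph V).edgeFinset \ G.edgeFinset := by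
    ext ⟨u, v⟩
    simp
  rw [hcompl, card_sdiff_of_subset hsub, ← card_edgeFinset_top_eq_card_choose_two]
  have := card_le_card hsub
  omega

lemma card_edgeFinset_le_of_label_sum_le {p : ℕ} (ℓ : V → ℕ) (hℓ : Injective ℓ)
    (hpos : ∀ v, 0 < ℓ v) (hsum : ∀ u v, G.Adj u v → ℓ u + ℓ v ≤ p) :
    #G.edgeFinset ≤ ∑ j ∈ Icc 1 (p / 2), (p - 2 * j) := by
  let labelPair : Sym2 V ↪ Sym2 ℕ := ⟨Sym2.map ℓ, Sym2.map.injective hℓ⟩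
  have hsub : G.edgeFinset.map labelPair ⊆
      (sumBoundedPairs p).image fun x => s(x.1, x.2) := by
    intro s hs
    obtain ⟨t, ht, rfl⟩ := mem_map.1 hs
    induction t using Sym2.ind with
    | _ u v =>
      have hadj : G.Adj u v := by simpa using ht
      simp only [labelPair, Embedding.coeFn_mk, Sym2.map_mk, mem_image]
      rcases (hℓ.ne hadj.ne).lt_or_gt with h | h
      · exact ⟨_, mem_sumBoundedPairs (hpos u) h (hsum u v hadj), rfl⟩
      · exact ⟨_, mem_sumBoundedPairs (hpos v) h ((add_comm _ _).trans_le (hsum u v hadj)),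
          Sym2.eq_swap⟩
  calc #G.edgeFinset = #(G.edgeFinset.map labelPair) := (card_map _).symm
    _ ≤ #((sumBoundedPairs p).image fun x => s(x.1, x.2)) := card_le_card hsub
    _ ≤ #(sumBoundedPairs p) := card_image_le
    _ = ∑ j ∈ Icc 1 (p / 2), (p - 2 * j) := card_sumBoundedPairs p

end SimpleGraph

theorem weight_graph_necessary_conditions_general {V : Type*} [Fintype V] [DecidableEq V]
    (G : SimpleGraph V) [DecidableRel G.Adj] (p : ℕ)
    (hcard : Fintype.card V = p)
    (v₀ : V) (huniv : ∀ w : V, w ≠ v₀ → G.Adj v₀ w)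
    (hlabel : ∃ e : V ≃ Fin p, ∀ u v : V, Gᶜ.Adj u v →
      ((e u).val + 1) + ((e v).val + 1) ≤ p) :
    (∀ u v : V, G.dist u v ≤ 2) ∧
      (∀ n : ℕ, 2 ≤ n → G.powerGraph n = G.powerGraph 2) ∧
      p.choose 2 - ∑ j ∈ Finset.Icc 1 (p / 2), (p - 2 * j) ≤ G.edgeFinset.card := by
  obtain ⟨e, he⟩ := hlabel
  have hdist := G.dist_le_two_of_forall_adj huniv
  refine ⟨hdist, fun n hn => G.powerGraph_eq_of_forall_dist_le hdist hn, ?_⟩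
  have hcompl := Gᶜ.card_edgeFinset_le_of_label_sum_le (fun v => (e v).val + 1)
    (fun u v h => e.injective (Fin.val_injective (Nat.succ_injective h)))
    (fun _ => Nat.succ_pos _) he
  have htotal := G.card_edgeFinset_add_card_edgeFinset_compl
  rw [hcard] at htotal
  omega

/-- Necessary conditions for weight graphs: if a finite simple graph `G` on `p`
vertices has a universal vertex, and its vertices can be labeled bijectively by
`{1, …, p}` (via `Fin p`, vertex `i` carrying label `i + 1`) so that any two vertices
adjacent in the complement `Ḡ` have label-sum at most `p`, then: (1) any two vertices
are at distance at most 2; (2) for every `n ≥ 2` the `n`-th power of `G` equals its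
square; (3) `G` has at least `C(p,2) - ∑_{j=1}^{⌊p/2⌋} (p - 2j)` edges. -/
theorem weight_graph_necessary_conditions {V : Type*} [Fintype V] [DecidableEq V]
    (G : SimpleGraph V) [DecidableRel G.Adj] (p : ℕ) (hp : 1 ≤ p)
    (hcard : Fintype.card V = p)
    (v₀ : V) (huniv : ∀ w : V, w ≠ v₀ → G.Adj v₀ w)
    (hlabel : ∃ e : V ≃ Fin p, ∀ u v : V, Gᶜ.Adj u v →
      ((e u).val + 1) + ((e v).val + 1) ≤ p) :
    (∀ u v : V, G.dist u v ≤ 2) ∧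
      (∀ n : ℕ, 2 ≤ n → G.powerGraph n = G.powerGraph 2) ∧
      p.choose 2 - ∑ j ∈ Finset.Icc 1 (p / 2), (p - 2 * j) ≤ G.edgeFinset.card :=
  weight_graph_necessary_conditions_general G p hcard v₀ huniv hlabel
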